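/- arXiv:1911.04644 — 2 statements merged into one kernel-verified Lean document; each statement's English description precedes it below -/
import Mathlib

section
/- (Theorem 1(b), sufficiency: exponential class.) Let m_p : ℕ → ℕ and suppose there exist real constants β > 0 and b with 1 < b < 2 such that m_p(N)/(β·b^N) → 1 as N → ∞ (so m_p(N) < 2^N eventually). Then lim_{N→∞} (1/N)·log₂( 2·m_p(N)·(2^N − m_p(N))/2^N ) = log₂ b, which lies strictly between 0 and 1. -/
open Filter Real

/-- Theorem 1(b), sufficiency: if `m_p(N) ∼ β · b^N` with `1 < b < 2`, then the
entropy equals `log₂ b ∈ (0, 1)`. -/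
theorem entropy_eq_logb_of_exponential
    (m_p : ℕ → ℕ) (β b : ℝ) (hβ : 0 < β) (hb1 : 1 < b) (hb2 : b < 2)
    (hexp : Filter.Tendsto (fun N : ℕ => (m_p N : ℝ) / (β * b ^ N))
      Filter.atTop (nhds 1)) :
    Filter.Tendsto
      (fun N : ℕ =>
        (1 / (N : ℝ)) *
          Real.logb 2 (2 * (m_p N : ℝ) * ((2 : ℝ) ^ N - (m_p N : ℝ)) / (2 : ℝ) ^ N))
      Filter.atTop (nhds (Real.logb 2 b))
    ∧ 0 < Real.logb 2 b ∧ Real.logb 2 b < 1 := by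
  have hb0 : (0:ℝ) < b := lt_trans one_pos hb1
  set g : ℕ → ℝ := fun N => 2 * (m_p N : ℝ) * ((2:ℝ)^N - (m_p N : ℝ)) / (2:ℝ)^N / b^N with hg_def
  -- (b/2)^N → 0
  have hhalf : Tendsto (fun N : ℕ => (b/2)^N) atTop (nhds 0) :=
    tendsto_pow_atTop_nhds_zero_of_lt_one (by positivity)
      ((div_lt_one (by norm_num)).mpr hb2)
  -- m_p N / 2^N → 0
  have hs : Tendsto (fun N : ℕ => (m_p N : ℝ) / 2 ^ N) atTop (nhds 0) := by
    have h := hexp.mul (hhalf.const_mul β)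
    simp only [one_mul, mul_zero] at h
    apply h.congr
    intro N
    have hbN : (b:ℝ)^N ≠ 0 := pow_ne_zero _ hb0.ne'
    field_simp
    rw [mul_assoc, ← mul_pow, div_mul_cancel₀ _ (by norm_num : (2:ℝ) ≠ 0)]
  -- g → 2β
  have hg : Tendsto g atTop (nhds (2 * β)) := by
    have h1 : Tendsto (fun N : ℕ => 2 * β * ((m_p N : ℝ) / (β * b ^ N)) *
        (1 - (m_p N : ℝ) / 2 ^ N)) atTop (nhds (2 * β * 1 * (1 - 0))) :=
      ((tendsto_const_nhds.mul hexp).mul (tendsto_const_nhds.sub hs))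
    simp only [mul_one, sub_zero] at h1
    apply h1.congr
    intro N
    have hbN : (b:ℝ)^N ≠ 0 := pow_ne_zero _ hb0.ne'
    have h2N : ((2:ℝ))^N ≠ 0 := pow_ne_zero _ (by norm_num)
    simp only [hg_def]
    field_simp
  have h2β : (0:ℝ) < 2 * β := by linarith
  have hev : ∀ᶠ N in atTop, 0 < g N := hg.eventually (eventually_gt_nhds h2β)
  constructor
  · have key : Tendsto (fun N : ℕ => Real.logb 2 b + (1/(N:ℝ)) * Real.logb 2 (g N))
        atTop (nhds (Real.logb 2 b + 0 * Real.logb 2 (2*β))) := by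
      apply tendsto_const_nhds.add
      apply Tendsto.mul tendsto_one_div_atTop_nhds_zero_nat
      have : Tendsto (fun N => Real.log (g N)) atTop (nhds (Real.log (2*β))) :=
        (Real.continuousAt_log h2β.ne').tendsto.comp hg
      exact this.div_const _
    simp only [zero_mul, add_zero] at key
    apply key.congr'
    filter_upwards [hev, eventually_ge_atTop 1] with N hgN hN1
    have hN0 : (N:ℝ) ≠ 0 := by exact_mod_cast Nat.one_le_iff_ne_zero.mp hN1
    have hbN : (b:ℝ)^N ≠ 0 := pow_ne_zero _ hb0.ne'
    have hf : 2 * (m_p N : ℝ) * ((2:ℝ)^N - (m_p N : ℝ)) / (2:ℝ)^N = b^N * g N := by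
      simp only [hg_def]; field_simp
    rw [hf, Real.logb_mul hbN hgN.ne', Real.logb_pow]
    field_simp
  constructor
  · exact Real.logb_pos (by norm_num) hb1
  · have : Real.logb 2 b < Real.logb 2 2 := by
      exact Real.logb_lt_logb (by norm_num) hb0 hb2
    simpa using this
end

section
/- Let m_p, m_n ∈ ℕ with M = m_p + m_n ≥ 1. Consider a uniformly random binary sequence s ∈ {0,1}^M containing exactly m_p ones (positive labels) and m_n zeros (negative labels). Let R_p be the number of positions i ∈ {1,…,M} at which a run of ones starts, i.e., s_i = 1 and (i = 1 or s_{i−1} = 0). Then E[R_p] = m_p·(1 + m_n)/M, and symmetrically the expected number of runs of zeros is E[R_n] = m_n·(1 + m_p)/M. -/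
/-!
With `k` letters `b` and `l` other letters in `M = k + l` positions, the number of runs of `b`s
is `[s₀ = b] + ∑_{i ≥ 1} [sᵢ = b ∧ sᵢ₋₁ ≠ b]`. The set of such sequences is invariant under
permutations of the positions, so the number of sequences with `sᵢ = b` (resp. `sᵢ = b ∧ sⱼ ≠ b`,
`i ≠ j`) does not depend on `i` (resp. on `(i, j)`); double counting then gives the proportions
`k / M` and `k l / (M (M - 1))`. Summing, the mean is `k / M + (M - 1) k l / (M (M - 1))
= k (1 + l) / M`. Runs of zeros are the runs of `b = false` in the same set of sequences.
-/

open Finset Function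

namespace RunCount

section Exchangeable

variable {α β : Type*}

theorem card_filter_comp_eq_of_injective {S : Finset (α → β)}
    (hS : ∀ σ : Equiv.Perm α, ∀ s ∈ S, s ∘ σ ∈ S) {ι : Type*} [Finite ι] {f g : ι → α}
    (hf : Injective f) (hg : Injective g) (P : (ι → β) → Prop) [DecidablePred P] :
    #{s ∈ S | P (s ∘ f)} = #{s ∈ S | P (s ∘ g)} := by
  obtain ⟨σ, hσ⟩ := Equiv.Perm.exists_extending_pair f g hf hg
  have hσf : ∀ s : α → β, s ∘ σ ∘ f = s ∘ g := fun s => funext fun a => by simp [hσ]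
  have hσg : ∀ s : α → β, s ∘ σ.symm ∘ g = s ∘ f := fun s => funext fun a => by
    simp [← hσ]
  refine card_nbij' (· ∘ σ.symm) (· ∘ σ) ?_ ?_ ?_ ?_
  · intro s hs
    simp only [coe_filter, Set.mem_ofPred_eq] at hs ⊢
    exact ⟨hS _ _ hs.1, by rw [comp_assoc, hσg]; exact hs.2⟩
  · intro s hs
    simp only [coe_filter, Set.mem_ofPred_eq] at hs ⊢
    exact ⟨hS _ _ hs.1, by rw [comp_assoc, hσf]; exact hs.2⟩
  · intro s _; simp [comp_assoc]
  · intro s _; simp [comp_assoc]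

variable [Fintype α] [DecidableEq β]

variable (α) in
def withCount [DecidableEq α] [Fintype β] (b : β) (k : ℕ) : Finset (α → β) :=
  {s | #{i | s i = b} = k}

theorem card_filter_apply_perm_eq (s : α → β) (b : β) (σ : Equiv.Perm α) :
    #{i | s (σ i) = b} = #{i | s i = b} :=
  card_equiv σ (by simp)

variable [DecidableEq α] [Fintype β]

theorem comp_perm_mem_withCount {s : α → β} {b : β} {k : ℕ} (σ : Equiv.Perm α)
    (hs : s ∈ withCount α b k) : s ∘ σ ∈ withCount α b k := by
  simpa [withCount, card_filter_apply_perm_eq] using hs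

theorem card_mul_card_filter_apply_eq (b : β) (k : ℕ) (i : α) :
    Fintype.card α * #{s ∈ withCount α b k | s i = b} = k * #(withCount α b k) := by
  have hconst : ∀ j, #{s ∈ withCount α b k | s j = b} = #{s ∈ withCount α b k | s i = b} :=
    fun j => card_filter_comp_eq_of_injective (fun σ _ => comp_perm_mem_withCount σ)
      (f := fun _ : Unit => j) (g := fun _ => i) (injective_of_subsingleton _)
      (injective_of_subsingleton _) (fun t => t () = b)
  calc Fintype.card α * #{s ∈ withCount α b k | s i = b}
      = ∑ j, #{s ∈ withCount α b k | s j = b} := by simp [hconst]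
    _ = ∑ s ∈ withCount α b k, #{j | s j = b} :=
      sum_card_bipartiteAbove_eq_sum_card_bipartiteBelow (fun j (s : α → β) => s j = b)
    _ = k * #(withCount α b k) := by
      rw [sum_const_nat fun s (hs : s ∈ withCount α b k) => (mem_filter.1 hs).2, mul_comm]

theorem card_mul_card_filter_apply_eq_apply_ne (b : β) {k l : ℕ} (hkl : k + l = Fintype.card α)
    {i j : α} (hij : i ≠ j) :
    Fintype.card α * (Fintype.card α - 1) * #{s ∈ withCount α b k | s i = b ∧ s j ≠ b}
      = k * l * #(withCount α b k) := by
  have hconst : ∀ p ∈ (univ : Finset α).offDiag,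
      #{s ∈ withCount α b k | s p.1 = b ∧ s p.2 ≠ b}
        = #{s ∈ withCount α b k | s i = b ∧ s j ≠ b} := by
    intro p hp
    exact card_filter_comp_eq_of_injective (fun σ _ => comp_perm_mem_withCount σ)
      (injective_pair_iff_ne.2 (mem_offDiag.1 hp).2.2)
      (injective_pair_iff_ne.2 hij) (fun t => t 0 = b ∧ t 1 ≠ b)
  have hpairs : ∀ s ∈ withCount α b k,
      #{p ∈ (univ : Finset α).offDiag | s p.1 = b ∧ s p.2 ≠ b} = k * l := by
    intro s hs
    have hk : #{i | s i = b} = k := (mem_filter.1 hs).2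
    have hl : #{i | s i ≠ b} = l := by
      have : #{i | s i = b} + #{i | s i ≠ b} = Fintype.card α :=
        card_filter_add_card_filter_not _
      omega
    rw [← hk, ← hl, ← card_product]
    congr 1
    ext ⟨x, y⟩
    simp only [mem_filter, mem_offDiag, mem_univ, true_and, mem_product]
    exact ⟨And.right, fun h => ⟨fun hxy => h.2 (hxy ▸ h.1), h⟩⟩
  calc Fintype.card α * (Fintype.card α - 1) * #{s ∈ withCount α b k | s i = b ∧ s j ≠ b}
      = ∑ p ∈ (univ : Finset α).offDiag, #{s ∈ withCount α b k | s p.1 = b ∧ s p.2 ≠ b} := by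
        rw [sum_const_nat hconst, offDiag_card, card_univ, Nat.mul_sub_one]
    _ = ∑ s ∈ withCount α b k, #{p ∈ (univ : Finset α).offDiag | s p.1 = b ∧ s p.2 ≠ b} :=
      sum_card_bipartiteAbove_eq_sum_card_bipartiteBelow
        (fun (p : α × α) (s : α → β) => s p.1 = b ∧ s p.2 ≠ b)
    _ = k * l * #(withCount α b k) := by rw [sum_const_nat hpairs, mul_comm]

end Exchangeable

section Binary

variable {α : Type*} [Fintype α] [DecidableEq α]

theorem withCount_not {b : Bool} {k l : ℕ} (hkl : k + l = Fintype.card α) :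
    withCount α b k = withCount α (!b) l := by
  ext s
  have : #{i | s i = b} + #{i | s i ≠ b} = Fintype.card α := card_filter_add_card_filter_not _
  simp only [withCount, mem_filter, mem_univ, true_and, Bool.eq_not_iff]
  omega

theorem withCount_nonempty (b : Bool) {k : ℕ} (hk : k ≤ Fintype.card α) :
    (withCount α b k).Nonempty := by
  obtain ⟨t, -, ht⟩ := exists_subset_card_eq (s := (univ : Finset α)) (by simpa using hk)
  refine ⟨fun i => if i ∈ t then b else !b, ?_⟩
  simpa [withCount] using ht

end Binary

section Runs

variable {M : ℕ}

def IsRunStart (s : Fin M → Bool) (b : Bool) (i : Fin M) : Prop :=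
  s i = b ∧ ((i : ℕ) = 0 ∨ ∃ j : Fin M, (j : ℕ) + 1 = i ∧ s j = !b)

instance (s : Fin M → Bool) (b : Bool) : DecidablePred (IsRunStart s b) :=
  fun _ => inferInstanceAs (Decidable (_ ∧ _))

theorem isRunStart_iff_of_val_eq_zero {s : Fin M → Bool} {b : Bool} {i : Fin M}
    (hi : (i : ℕ) = 0) : IsRunStart s b i ↔ s i = b :=
  ⟨And.left, fun h => ⟨h, Or.inl hi⟩⟩

theorem isRunStart_iff_of_val_eq_succ {s : Fin M → Bool} {b : Bool} {i j : Fin M}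
    (hji : (j : ℕ) + 1 = i) : IsRunStart s b i ↔ s i = b ∧ s j ≠ b := by
  have hj : ∀ j' : Fin M, (j' : ℕ) + 1 = i ↔ j' = j := fun j' => by rw [Fin.ext_iff]; omega
  have hi : (i : ℕ) ≠ 0 := by omega
  simp only [IsRunStart, hj, hi, exists_eq_left, Bool.eq_not_iff, false_or]

theorem card_mul_sum_card_filter_isRunStart_erase_zero (b : Bool) {k l : ℕ} (hkl : k + l = M)
    (hM : 0 < M) :
    M * ∑ i ∈ univ.erase ⟨0, hM⟩, #{s ∈ withCount (Fin M) b k | IsRunStart s b i}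
      = k * l * #(withCount (Fin M) b k) := by
  rcases le_or_gt M 1 with hM1 | hM1
  · have hempty : (univ : Finset (Fin M)).erase ⟨0, hM⟩ = ∅ := by
      ext i; simp [Fin.ext_iff]; omega
    have hkl0 : k * l = 0 := Nat.mul_eq_zero.2 (by omega)
    simp [hempty, hkl0]
  · have hterm : ∀ i ∈ univ.erase ⟨0, hM⟩,
        M * (M - 1) * #{s ∈ withCount (Fin M) b k | IsRunStart s b i}
          = k * l * #(withCount (Fin M) b k) := by
      intro i hi
      have hi0 : (i : ℕ) ≠ 0 := fun h => ne_of_mem_erase hi (Fin.ext h)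
      let j : Fin M := ⟨i - 1, by omega⟩
      have hji : (j : ℕ) + 1 = i := by simp only [j]; omega
      rw [filter_congr fun s _ => isRunStart_iff_of_val_eq_succ (s := s) (b := b) hji]
      simpa using card_mul_card_filter_apply_eq_apply_ne b (by simpa using hkl)
        (Fin.ne_of_val_ne (by omega) : i ≠ j)
    apply Nat.eq_of_mul_eq_mul_left (show 0 < M - 1 by omega)
    rw [← mul_assoc, mul_comm (M - 1) M, mul_sum, sum_congr rfl hterm, sum_const,
      card_erase_of_mem (mem_univ _), card_univ, Fintype.card_fin, smul_eq_mul]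

theorem card_mul_sum_card_filter_isRunStart (b : Bool) {k l : ℕ} (hkl : k + l = M)
    (hM : 0 < M) :
    M * ∑ s ∈ withCount (Fin M) b k, #{i | IsRunStart s b i}
      = k * (1 + l) * #(withCount (Fin M) b k) := by
  have hfirst := card_mul_card_filter_apply_eq b k (⟨0, hM⟩ : Fin M)
  rw [Fintype.card_fin] at hfirst
  calc M * ∑ s ∈ withCount (Fin M) b k, #{i | IsRunStart s b i}
      = M * ∑ i, #{s ∈ withCount (Fin M) b k | IsRunStart s b i} := by
        congr 1
        exact sum_card_bipartiteAbove_eq_sum_card_bipartiteBelow (fun s i => IsRunStart s b i)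
    _ = M * #{s ∈ withCount (Fin M) b k | s ⟨0, hM⟩ = b}
          + M * ∑ i ∈ univ.erase ⟨0, hM⟩, #{s ∈ withCount (Fin M) b k | IsRunStart s b i} := by
        rw [← add_sum_erase _ _ (mem_univ ⟨0, hM⟩), mul_add,
          filter_congr fun s _ => isRunStart_iff_of_val_eq_zero (s := s) (b := b) rfl]
    _ = k * (1 + l) * #(withCount (Fin M) b k) := by
        rw [hfirst, card_mul_sum_card_filter_isRunStart_erase_zero b hkl hM]
        ring

theorem sum_card_filter_isRunStart_div_card (b : Bool) {k l : ℕ} (hkl : k + l = M)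
    (hM : 0 < M) :
    (∑ s ∈ withCount (Fin M) b k, (#{i | IsRunStart s b i} : ℝ)) / #(withCount (Fin M) b k)
      = k * (1 + l) / M := by
  have hW : (0 : ℝ) < #(withCount (Fin M) b k) := by
    exact_mod_cast (withCount_nonempty b (by simp; omega)).card_pos
  rw [div_eq_div_iff hW.ne' (by exact_mod_cast hM.ne')]
  exact_mod_cast (mul_comm _ _).trans (card_mul_sum_card_filter_isRunStart b hkl hM)

end Runs

end RunCount

open RunCount in
/-- The expected number of runs of ones (resp. zeros) in a uniformly random binary
sequence of length `M = m_p + m_n` with exactly `m_p` ones is `m_p (1 + m_n) / M`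
(resp. `m_n (1 + m_p) / M`). -/
theorem expected_number_of_runs (m_p m_n : ℕ) (hM : 1 ≤ m_p + m_n) :
    let M := m_p + m_n
    let S : Finset (Fin M → Bool) :=
      Finset.univ.filter (fun s => (Finset.univ.filter (fun i => s i = true)).card = m_p)
    let runStart : (Fin M → Bool) → Bool → (Fin M) → Prop :=
      fun s b i => s i = b ∧ ((i : ℕ) = 0 ∨ ∃ j : Fin M, (j : ℕ) + 1 = (i : ℕ) ∧ s j = !b)
    let R : (Fin M → Bool) → Bool → ℕ :=
      fun s b => (Finset.univ.filter (fun i => runStart s b i)).card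
    ((∑ s ∈ S, (R s true : ℝ)) / S.card = (m_p : ℝ) * (1 + m_n) / M) ∧
    ((∑ s ∈ S, (R s false : ℝ)) / S.card = (m_n : ℝ) * (1 + m_p) / M) := by
  intro M S runStart R
  have hS : S = withCount (Fin M) false m_n := withCount_not (b := true) (by simp [M])
  refine ⟨sum_card_filter_isRunStart_div_card true rfl hM, ?_⟩
  rw [hS]
  exact sum_card_filter_isRunStart_div_card false (add_comm m_n m_p) hM
end
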